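/- arXiv:0804.1041 — 3 statements merged into one kernel-verified Lean document; each statement's English description precedes it below -/
import Mathlib

section
/- Voronoi cells under a convex distance function are star-shaped with respect to their site: if C is a compact convex set with the origin in its interior, S a finite point set, p ∈ S, and x a point with d_C(x,p) ≤ d_C(x,q) for all q ∈ S, then every point z on the line segment from x to p also satisfies d_C(z,p) ≤ d_C(z,q) for all q ∈ S. -/
open Metric Set MeasureTheory
open scoped MeasureTheory

noncomputable section

abbrev Pt := EuclideanSpace ℝ (Fin 2)

def homothet (C : Set Pt) (x : Pt) (l : ℝ) : Set Pt := (fun z => x + l • z) '' C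

def dC (C : Set Pt) (x y : Pt) : ℝ := sInf {l : ℝ | 0 ≤ l ∧ y ∈ homothet C x l}

def cross2 (u v : Pt) : ℝ := u 0 * v 1 - u 1 * v 0

def kappa (C : Set Pt) : ℝ :=
  sSup { k : ℝ | ∃ x ∈ frontier C, ∃ y ∈ frontier C, x ≠ y ∧ Collinear ℝ {x, y, (0:Pt)} ∧
      k = max (μH[1] {z ∈ frontier C | 0 ≤ cross2 x z}).toReal
              (μH[1] {z ∈ frontier C | cross2 x z ≤ 0}).toReal / dist x y }

def baseAngleSet (C : Set Pt) (x y : Pt) : Set ℝ :=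
  { θ : ℝ | ∃ a ∈ frontier C, dist a x = dist a y ∧ θ = EuclideanGeometry.angle y x a }

def alphaC (C : Set Pt) : ℝ :=
  sInf { θ : ℝ | ∃ x ∈ frontier C, ∃ y ∈ frontier C, x ≠ y ∧ θ = sSup (baseAngleSet C x y) }

def upperArcLen (D : Set Pt) (a b : Pt) : ℝ :=
  (μH[1] {z ∈ frontier D | 0 ≤ z 1 ∧ min (a 0) (b 0) ≤ z 0 ∧ z 0 ≤ max (a 0) (b 0)}).toReal

def walkLen : List Pt → ℝ
  | [] => 0
  | [_] => 0
  | a :: b :: l => dist a b + walkLen (b :: l)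

def DGadj (C : Set Pt) (S : Finset Pt) (p q : Pt) : Prop :=
  p ∈ S ∧ q ∈ S ∧ p ≠ q ∧ ∃ x : Pt, dC C x p = dC C x q ∧
    ∀ r ∈ S, r ≠ p → r ≠ q → dC C x p < dC C x r
/-! `dC C x y` is the gauge of `C` evaluated at `y - x`, so it satisfies the triangle inequality
and is additive along segments: for `z ∈ [x, p]`, `dC C z p = dC C x p - dC C x z`.
Hence `dC C z p ≤ dC C x q - dC C x z ≤ dC C z q`. -/

open scoped Pointwise

lemma mem_homothet_iff {C : Set Pt} {x y : Pt} {l : ℝ} :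
    y ∈ homothet C x l ↔ y - x ∈ l • C := by
  simp only [homothet, mem_image, mem_smul_set]
  exact exists_congr fun c => and_congr_right fun _ => eq_sub_iff_add_eq'.symm

-- `dC` admits `l = 0`, which `gauge` does not; this matters only at `y = x`, where both vanish.
theorem dC_eq_gauge (C : Set Pt) (x y : Pt) : dC C x y = gauge C (y - x) := by
  rcases eq_or_ne y x with rfl | hyx
  · rw [sub_self, gauge_zero, dC]
    rcases C.eq_empty_or_nonempty with rfl | ⟨c, hc⟩
    · simp [homothet]
    · exact IsLeast.csInf_eq ⟨⟨le_rfl, c, hc, by simp⟩, fun l hl => hl.1⟩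
  · rw [dC, gauge_def]
    congr 1
    ext l
    simp only [mem_ofPred_eq, mem_Ioi, mem_homothet_iff]
    refine ⟨fun ⟨hl, hmem⟩ => ⟨hl.lt_of_ne ?_, hmem⟩, fun ⟨hl, hmem⟩ => ⟨hl.le, hmem⟩⟩
    rintro rfl
    obtain ⟨c, -, hc⟩ := hmem
    exact sub_ne_zero.mpr hyx (by simpa using hc.symm)

theorem dC_triangle {C : Set Pt} (hconv : Convex ℝ C) (h0 : (0 : Pt) ∈ interior C)
    (x y z : Pt) : dC C x z ≤ dC C x y + dC C y z := by
  simp only [dC_eq_gauge]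
  simpa using gauge_add_le hconv (absorbent_nhds_zero (mem_interior_iff_mem_nhds.mp h0))
    (y - x) (z - y)

theorem dC_add_dC_of_mem_segment (C : Set Pt) {x y z : Pt} (hz : z ∈ segment ℝ x y) :
    dC C x z + dC C z y = dC C x y := by
  obtain ⟨t, ⟨ht0, ht1⟩, rfl⟩ := (segment_eq_image' ℝ x y).symm ▸ hz
  have hzx : x + t • (y - x) - x = t • (y - x) := by abel
  have hyz : y - (x + t • (y - x)) = (1 - t) • (y - x) := by module
  simp only [dC_eq_gauge, hzx, hyz, gauge_smul_of_nonneg ht0,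
    gauge_smul_of_nonneg (sub_nonneg.mpr ht1), smul_eq_mul]
  ring

theorem voronoi_cell_starShaped_general
    (C : Set Pt) (hconv : Convex ℝ C) (h0 : (0:Pt) ∈ interior C)
    (S : Finset Pt) (p : Pt) (x : Pt)
    (hx : ∀ q ∈ S, dC C x p ≤ dC C x q) :
    ∀ z ∈ segment ℝ x p, ∀ q ∈ S, dC C z p ≤ dC C z q := by
  intro z hz q hq
  have hsplit := dC_add_dC_of_mem_segment C hz
  have htri := dC_triangle hconv h0 x z q
  linarith [hx q hq]

/-- Voronoi cells are star-shaped with respect to their site. -/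
theorem voronoi_cell_starShaped
    (C : Set Pt) (hC : IsCompact C) (hconv : Convex ℝ C) (h0 : (0:Pt) ∈ interior C)
    (S : Finset Pt) (p : Pt) (hp : p ∈ S) (x : Pt)
    (hx : ∀ q ∈ S, dC C x p ≤ dC C x q) :
    ∀ z ∈ segment ℝ x p, ∀ q ∈ S, dC C z p ≤ dC C z q :=
  voronoi_cell_starShaped_general C hconv h0 S p x hx
end
end

section
/- The Delaunay graph DG_C(S) satisfies the α_C-diamond property: for every edge (p,q) of DG_C(S), at least one of the two isosceles triangles with base pq and base angle α_C contains no point of S in its interior, where α_C = min over pairs of distinct boundary points x,y of C of max(α_{xy}, α'_{xy}), with α_{xy}, α'_{xy} the base angles of the two isosceles triangles with base xy whose apex lies on the respective boundary chain of C determined by x and y. -/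
open Metric Set MeasureTheory
open scoped MeasureTheory

noncomputable section

/-!
Let `K = x + λC` be the empty homothet through `p` and `q`. Since `p, q ∈ ∂K` correspond to two
boundary points of `C`, and angles and equal distances are invariant under homotheties, the largest
base angle `∠ q p A` over apexes `A ∈ ∂K` on the perpendicular bisector of `pq` is at least `α_C`.
Moving the apex continuously from the midpoint of `pq` to `A` sweeps all base angles from `0` to
`∠ q p A`, so some apex `a` has base angle exactly `α_C`; the triangle `pqa` lies in the convex set
`K`, whose interior contains no point of `S`.
-/

open EuclideanGeometry

theorem EuclideanGeometry.angle_const_add_smul {V : Type*} [NormedAddCommGroup V]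
    [InnerProductSpace ℝ V] (x : V) {r : ℝ} (hr : r ≠ 0) (a b c : V) :
    ∠ (x + r • a) (x + r • b) (x + r • c) = ∠ a b c := by
  rw [angle_const_add]
  simp only [EuclideanGeometry.angle, vsub_eq_sub, ← smul_sub,
    InnerProductGeometry.angle_smul_smul hr]

theorem exists_mem_segment_midpoint_angle_eq {V : Type*} [NormedAddCommGroup V]
    [InnerProductSpace ℝ V] {p q A : V} {θ : ℝ} (hpq : p ≠ q) (hA : dist A p = dist A q)
    (hθ₀ : 0 ≤ θ) (hθ : θ ≤ ∠ q p A) :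
    ∃ a ∈ segment ℝ (midpoint ℝ p q) A, dist a p = dist a q ∧ ∠ q p a = θ := by
  set f : ℝ → V := fun t => AffineMap.lineMap (midpoint ℝ p q) A t
  have hseg : ∀ t ∈ Icc (0 : ℝ) 1, f t ∈ segment ℝ (midpoint ℝ p q) A := fun t ht =>
    segment_eq_image_lineMap ℝ (midpoint ℝ p q) A ▸ mem_image_of_mem f ht
  have hbis : ∀ t ∈ Icc (0 : ℝ) 1, dist (f t) p = dist (f t) q := fun t ht =>
    AffineSubspace.mem_perpBisector_iff_dist_eq.1 <|
      (AffineSubspace.perpBisector p q).convex.segment_subset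
        (AffineSubspace.midpoint_mem_perpBisector p q)
        (AffineSubspace.mem_perpBisector_iff_dist_eq.2 hA) (hseg t ht)
  have hne : ∀ t ∈ Icc (0 : ℝ) 1, f t ≠ p := fun t ht hp =>
    hpq (by simpa [hp, eq_comm] using hbis t ht)
  have hcont : ContinuousOn (fun t => ∠ q p (f t)) (Icc 0 1) := fun t ht =>
    ((continuousAt_angle (Ne.symm hpq) (hne t ht)).comp
      (by fun_prop : Continuous fun t => (q, p, f t)).continuousAt).continuousWithinAt
  have hθmem : θ ∈ Icc (∠ q p (f 0)) (∠ q p (f 1)) := by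
    simpa [f, (sbtw_midpoint_of_ne ℝ hpq).angle₃₁₂_eq_zero] using And.intro hθ₀ hθ
  obtain ⟨t, ht, hft⟩ := intermediate_value_Icc zero_le_one hcont hθmem
  exact ⟨f t, hseg t ht, hbis t ht, hft⟩

theorem frontier_homothet (C : Set Pt) (x : Pt) {l : ℝ} (hl : l ≠ 0) :
    frontier (homothet C x l) = homothet (frontier C) x l :=
  (((Homeomorph.smulOfNeZero l hl).trans (Homeomorph.addLeft x)).image_frontier C).symm

theorem IsCompact.homothet {C : Set Pt} (hC : IsCompact C) (x : Pt) (l : ℝ) :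
    IsCompact (homothet C x l) :=
  hC.image (by fun_prop)

theorem Convex.homothet {C : Set Pt} (hC : Convex ℝ C) (x : Pt) (l : ℝ) :
    Convex ℝ (homothet C x l) :=
  hC.affinity x l

theorem baseAngleSet_homothet (C : Set Pt) (x : Pt) {l : ℝ} (hl : l ≠ 0) (u v : Pt) :
    baseAngleSet (homothet C x l) (x + l • u) (x + l • v) = baseAngleSet C u v := by
  ext θ
  change (∃ a ∈ frontier (homothet C x l), _) ↔ ∃ a ∈ frontier C, _
  rw [frontier_homothet C x hl]
  simp only [homothet, exists_mem_image, dist_add_left, dist_smul₀,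
    angle_const_add_smul x hl, mul_right_inj' (norm_ne_zero_iff.2 hl)]

theorem sSup_baseAngleSet_nonneg (C : Set Pt) (x y : Pt) : 0 ≤ sSup (baseAngleSet C x y) :=
  Real.sSup_nonneg <| by
    rintro _ ⟨a, -, -, rfl⟩
    exact angle_nonneg _ _ _

theorem alphaC_nonneg (C : Set Pt) : 0 ≤ alphaC C :=
  Real.sInf_nonneg <| by
    rintro _ ⟨x, -, y, -, -, rfl⟩
    exact sSup_baseAngleSet_nonneg C x y

theorem alphaC_le_sSup_baseAngleSet_homothet {C : Set Pt} {x p q : Pt} {l : ℝ} (hl : l ≠ 0)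
    (hp : p ∈ frontier (homothet C x l)) (hq : q ∈ frontier (homothet C x l)) (hpq : p ≠ q) :
    alphaC C ≤ sSup (baseAngleSet (homothet C x l) p q) := by
  rw [frontier_homothet C x hl] at hp hq
  obtain ⟨u, hu, rfl⟩ := hp
  obtain ⟨v, hv, rfl⟩ := hq
  rw [baseAngleSet_homothet C x hl]
  refine csInf_le ⟨0, ?_⟩ ⟨u, hu, v, hv, fun huv => hpq (huv ▸ rfl), rfl⟩
  rintro _ ⟨x, -, y, -, -, rfl⟩
  exact sSup_baseAngleSet_nonneg C x y

theorem isCompact_baseAngleSet {K : Set Pt} (hK : IsCompact K) {p q : Pt} (hpq : p ≠ q) :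
    IsCompact (baseAngleSet K p q) := by
  set E := frontier K ∩ {a | dist a p = dist a q}
  have hE : IsCompact E :=
    hK.of_isClosed_subset (isClosed_frontier.inter (isClosed_eq (by fun_prop) (by fun_prop)))
      (inter_subset_left.trans hK.isClosed.frontier_subset)
  have hset : baseAngleSet K p q = (∠ q p ·) '' E := by
    ext θ
    simp only [baseAngleSet, E, mem_image, mem_inter_iff, mem_ofPred_eq, and_assoc,
      eq_comm (a := θ)]
  rw [hset]
  refine hE.image_of_continuousOn fun a ha => ?_
  have hap : a ≠ p := fun h => hpq (by simpa [h, eq_comm] using ha.2)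
  exact ((continuousAt_angle (Ne.symm hpq) hap).comp
    (by fun_prop : Continuous fun a => (q, p, a)).continuousAt).continuousWithinAt

theorem exists_mem_bisector_sSup_baseAngleSet_le {K : Set Pt} (hK : IsCompact K)
    (hconv : Convex ℝ K) {p q : Pt} (hp : p ∈ K) (hq : q ∈ K) (hpq : p ≠ q) :
    ∃ A ∈ K, dist A p = dist A q ∧ sSup (baseAngleSet K p q) ≤ ∠ q p A := by
  rcases (baseAngleSet K p q).eq_empty_or_nonempty with hempty | hne
  -- `sSup ∅ = 0` in `ℝ`, so the midpoint of `pq` is an admissible apex.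
  · refine ⟨midpoint ℝ p q, hconv.segment_subset hp hq (midpoint_mem_segment p q),
      AffineSubspace.mem_perpBisector_iff_dist_eq.1 (AffineSubspace.midpoint_mem_perpBisector p q),
      ?_⟩
    rw [hempty, Real.sSup_empty]
    exact angle_nonneg _ _ _
  · obtain ⟨A, hA, hAbis, hAθ⟩ := (isCompact_baseAngleSet hK hpq).sSup_mem hne
    exact ⟨A, hK.isClosed.frontier_subset hA, hAbis, hAθ.le⟩

theorem delaunay_diamond_property_general
    (C : Set Pt) (hC : IsCompact C) (hconv : Convex ℝ C)
    (S : Finset Pt) (p q : Pt) (hpq : p ≠ q)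
    (hedge : ∃ x : Pt, ∃ lam : ℝ, 0 < lam ∧
      p ∈ frontier (homothet C x lam) ∧ q ∈ frontier (homothet C x lam) ∧
      ∀ s ∈ S, s ∉ interior (homothet C x lam)) :
    ∃ a : Pt, dist a p = dist a q ∧ EuclideanGeometry.angle q p a = alphaC C ∧
      ∀ s ∈ S, s ∉ interior (convexHull ℝ {p, q, a}) := by
  obtain ⟨x, lam, hlam, hpF, hqF, hempty⟩ := hedge
  set K := homothet C x lam
  have hK : Convex ℝ K := hconv.homothet x lam
  have hpK : p ∈ K := (hC.homothet x lam).isClosed.frontier_subset hpF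
  have hqK : q ∈ K := (hC.homothet x lam).isClosed.frontier_subset hqF
  obtain ⟨A, hAK, hAbis, hA⟩ :=
    exists_mem_bisector_sSup_baseAngleSet_le (hC.homothet x lam) hK hpK hqK hpq
  obtain ⟨a, haseg, habis, hangle⟩ := exists_mem_segment_midpoint_angle_eq hpq hAbis
    (alphaC_nonneg C) ((alphaC_le_sSup_baseAngleSet_homothet hlam.ne' hpF hqF hpq).trans hA)
  have haK : a ∈ K :=
    hK.segment_subset (hK.segment_subset hpK hqK (midpoint_mem_segment p q)) hAK haseg
  have htriangle : convexHull ℝ {p, q, a} ⊆ K :=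
    convexHull_min
      (insert_subset_iff.2 ⟨hpK, insert_subset_iff.2 ⟨hqK, singleton_subset_iff.2 haK⟩⟩) hK
  exact ⟨a, habis, hangle, fun s hs hs' => hempty s hs (interior_mono htriangle hs')⟩

/-- The Delaunay graph satisfies the `α_C`-diamond property: for every edge `(p,q)`
(witnessed by an empty homothet through `p` and `q`), one of the two isosceles
triangles with base `pq` and base angle `α_C` contains no point of `S` in its
interior. -/
theorem delaunay_diamond_property
    (C : Set Pt) (hC : IsCompact C) (hconv : Convex ℝ C) (h0 : (0:Pt) ∈ interior C)
    (S : Finset Pt) (p q : Pt) (hp : p ∈ S) (hq : q ∈ S) (hpq : p ≠ q)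
    (hedge : ∃ x : Pt, ∃ lam : ℝ, 0 < lam ∧
      p ∈ frontier (homothet C x lam) ∧ q ∈ frontier (homothet C x lam) ∧
      ∀ s ∈ S, s ∉ interior (homothet C x lam)) :
    ∃ a : Pt, dist a p = dist a q ∧ EuclideanGeometry.angle q p a = alphaC C ∧
      ∀ s ∈ S, s ∉ interior (convexHull ℝ {p, q, a}) :=
  delaunay_diamond_property_general C hC hconv S p q hpq hedge
end
end

section
/- If a connected plane geometric graph G on a finite vertex set S satisfies the visible-pair κ'-spanner property and has the property that every direct path (walking along faces crossed by a straight segment) between two vertices p, q realizes stretch at most t₀ whenever the open segment pq avoids vertices of S, then for every pair of vertices p, q there is a path in G of Euclidean length at most max(κ', t₀)·|pq|. (Composition step used to derive the spanner bound of Theorem 1.) -/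
open Metric Set MeasureTheory
open scoped MeasureTheory

noncomputable section

/-! Induct on the number of points of `S` in the open segment `pq`. If there are none, the
direct-path bound applies, with stretch `t₀ ≤ max κ' t₀`. Otherwise split at such a point `s`:
both `ps` and `sq` contain fewer points of `S`, and `|ps| + |sq| = |pq|`, so concatenating the
two walks keeps the stretch. -/

section Segment

variable {𝕜 E : Type*} [Field 𝕜] [LinearOrder 𝕜] [IsStrictOrderedRing 𝕜] [AddCommGroup E]
  [Module 𝕜 E] {p q s : E}

theorem openSegment_subset_openSegment_of_mem_left (hs : s ∈ openSegment 𝕜 p q) :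
    openSegment 𝕜 p s ⊆ openSegment 𝕜 p q := by
  simp only [openSegment_eq_image_lineMap] at hs ⊢
  obtain ⟨c, ⟨hc₀, hc₁⟩, rfl⟩ := hs
  rintro _ ⟨d, ⟨hd₀, hd₁⟩, rfl⟩
  exact ⟨d * c, ⟨mul_pos hd₀ hc₀, mul_lt_one_of_nonneg_of_lt_one_left hd₀.le hd₁ hc₁.le⟩,
    (AffineMap.lineMap_lineMap_right _ _ _ _).symm⟩

theorem ncard_inter_openSegment_lt_left {T : Set E} (hT : T.Finite) (hpq : p ≠ q) (hsT : s ∈ T)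
    (hs : s ∈ openSegment 𝕜 p q) :
    (T ∩ openSegment 𝕜 p s).ncard < (T ∩ openSegment 𝕜 p q).ncard := by
  have hps : p ≠ s := by
    rintro rfl
    exact hpq (left_mem_openSegment_iff.mp hs)
  refine ncard_lt_ncard ((ssubset_iff_of_subset ?_).mpr ⟨s, ⟨hsT, hs⟩, ?_⟩) (hT.inter_of_left _)
  · exact inter_subset_inter_right T (openSegment_subset_openSegment_of_mem_left hs)
  · exact fun h => hps (right_mem_openSegment_iff.mp h.2)

theorem ncard_inter_openSegment_lt_right {T : Set E} (hT : T.Finite) (hpq : p ≠ q) (hsT : s ∈ T)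
    (hs : s ∈ openSegment 𝕜 p q) :
    (T ∩ openSegment 𝕜 s q).ncard < (T ∩ openSegment 𝕜 p q).ncard := by
  rw [openSegment_symm 𝕜 p] at hs ⊢
  rw [openSegment_symm 𝕜 s]
  exact ncard_inter_openSegment_lt_left hT hpq.symm hsT hs

end Segment

theorem walkLen_append {l₁ : List Pt} {s : Pt} (h : l₁.getLast? = some s) (l₂ : List Pt) :
    walkLen (l₁ ++ l₂) = walkLen l₁ + walkLen (s :: l₂) := by
  induction l₁ with
  | nil => simp at h
  | cons a t ih =>
    cases t with
    | nil =>
      obtain rfl : a = s := by simpa using h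
      cases l₂ <;> simp [walkLen]
    | cons b t =>
      simp only [List.cons_append, walkLen] at ih ⊢
      rw [ih (by simpa using h), add_assoc]

def HasWalkWithin (adj : Pt → Pt → Prop) (p q : Pt) (c : ℝ) : Prop :=
  ∃ l : List Pt, l.IsChain adj ∧ l.head? = some p ∧ l.getLast? = some q ∧ walkLen l ≤ c

namespace HasWalkWithin

variable {adj : Pt → Pt → Prop} {p q s : Pt} {a b : ℝ}

theorem refl (p : Pt) : HasWalkWithin adj p p 0 :=
  ⟨[p], List.isChain_singleton p, rfl, rfl, le_rfl⟩

theorem mono (h : HasWalkWithin adj p q a) (hab : a ≤ b) : HasWalkWithin adj p q b :=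
  let ⟨l, hl, hp, hq, hlen⟩ := h
  ⟨l, hl, hp, hq, hlen.trans hab⟩

theorem trans (h₁ : HasWalkWithin adj p s a) (h₂ : HasWalkWithin adj s q b) :
    HasWalkWithin adj p q (a + b) := by
  obtain ⟨l₁, hl₁, hp, hs, hlen₁⟩ := h₁
  obtain ⟨l₂, hl₂, hs', hq, hlen₂⟩ := h₂
  obtain ⟨t, rfl⟩ := List.head?_eq_some_iff.mp hs'
  refine ⟨l₁ ++ t, hl₁.append hl₂.tail ?_, ?_, ?_, ?_⟩
  · simpa [hs] using (List.isChain_cons.mp hl₂).1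
  · obtain ⟨u, rfl⟩ := List.head?_eq_some_iff.mp hp
    rfl
  · cases t with
    | nil => simpa [hs] using hq
    | cons => simpa [List.getLast?_append] using hq
  · rw [walkLen_append hs]
    exact add_le_add hlen₁ hlen₂

end HasWalkWithin

theorem hasWalkWithin_mul_dist {S : Set Pt} (hS : S.Finite) {adj : Pt → Pt → Prop} {t : ℝ}
    (hdirect : ∀ p ∈ S, ∀ q ∈ S, p ≠ q → (∀ s ∈ S, s ∉ openSegment ℝ p q) →
      HasWalkWithin adj p q (t * dist p q))
    {p q : Pt} (hp : p ∈ S) (hq : q ∈ S) : HasWalkWithin adj p q (t * dist p q) := by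
  induction hn : (S ∩ openSegment ℝ p q).ncard using Nat.strong_induction_on
      generalizing p q with
  | _ n ih =>
    subst hn
    obtain rfl | hpq := eq_or_ne p q
    · simpa using HasWalkWithin.refl (adj := adj) p
    by_cases hfree : ∀ s ∈ S, s ∉ openSegment ℝ p q
    · exact hdirect p hp q hq hpq hfree
    push Not at hfree
    obtain ⟨s, hs, hspq⟩ := hfree
    have hsplit : t * dist p s + t * dist s q = t * dist p q := by
      rw [← mul_add, dist_add_dist_of_mem_segment (openSegment_subset_segment ℝ p q hspq)]
    exact ((ih _ (ncard_inter_openSegment_lt_left hS hpq hs hspq) hp hs rfl).trans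
      (ih _ (ncard_inter_openSegment_lt_right hS hpq hs hspq) hs hq rfl)).mono hsplit.le

theorem visible_pair_composition_general
    (S : Finset Pt) (adj : Pt → Pt → Prop)
    (κ' t₀ : ℝ)
    (hdirect : ∀ p ∈ S, ∀ q ∈ S, p ≠ q → (∀ s ∈ S, s ∉ openSegment ℝ p q) →
      ∃ l : List Pt, l.Chain' adj ∧ l.head? = some p ∧ l.getLast? = some q ∧
        walkLen l ≤ t₀ * dist p q) :
    ∀ p ∈ S, ∀ q ∈ S,
      ∃ l : List Pt, l.Chain' adj ∧ l.head? = some p ∧ l.getLast? = some q ∧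
        walkLen l ≤ max κ' t₀ * dist p q := fun _ hp _ hq =>
  hasWalkWithin_mul_dist S.finite_toSet
    (fun p hp q hq hpq hfree => HasWalkWithin.mono (hdirect p hp q hq hpq hfree)
      (mul_le_mul_of_nonneg_right (le_max_right κ' t₀) dist_nonneg)) hp hq

/-- Composition step: a connected plane graph with the visible-pair `κ'`-spanner
property in which direct paths along vertex-free segments have stretch at most `t₀`
is a `max(κ', t₀)`-spanner. -/
theorem visible_pair_composition
    (S : Finset Pt) (adj : Pt → Pt → Prop) (visible : Pt → Pt → Prop)
    (κ' t₀ : ℝ)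
    (hadjS : ∀ p q : Pt, adj p q → p ∈ S ∧ q ∈ S)
    (hvp : ∀ p ∈ S, ∀ q ∈ S, p ≠ q → visible p q →
      ∃ l : List Pt, l.Chain' adj ∧ l.head? = some p ∧ l.getLast? = some q ∧
        walkLen l ≤ κ' * dist p q)
    (hdirect : ∀ p ∈ S, ∀ q ∈ S, p ≠ q → (∀ s ∈ S, s ∉ openSegment ℝ p q) →
      ∃ l : List Pt, l.Chain' adj ∧ l.head? = some p ∧ l.getLast? = some q ∧
        walkLen l ≤ t₀ * dist p q) :
    ∀ p ∈ S, ∀ q ∈ S,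
      ∃ l : List Pt, l.Chain' adj ∧ l.head? = some p ∧ l.getLast? = some q ∧
        walkLen l ≤ max κ' t₀ * dist p q :=
  visible_pair_composition_general S adj κ' t₀ hdirect
end
end
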